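/- arXiv:2605.01051 — 3 statements merged into one kernel-verified Lean document; each statement's English description precedes it below -/
import Mathlib

section
/- Along any infinite trajectory, assuming robustness scores take values in a finite set, there exists a finite time τ ≥ 0 such that the smallest witness time of ρ_{[q U r]} for the shifted trajectory x_{τ:∞} equals 0. -/
variable {X A : Type*}

/-- Suffix (time shift) of an infinite trajectory. -/
def shift (x : ℕ → X) (t : ℕ) : ℕ → X := fun n => x (n + t)

/-- The candidate term at witness time `t` in the quantitative semantics of `q U r`:
`min (r (x_{t:∞}), min_{0 ≤ k < t} q (x_k))` (empty min is `⊤`). -/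
noncomputable def untilTerm (q : X → EReal) (r : (ℕ → X) → EReal) (x : ℕ → X) (t : ℕ) : EReal :=
  min (r (shift x t)) (⨅ k : Fin t, q (x k))

/-- Robustness of `q U r` on an infinite trajectory. -/
noncomputable def untilRob (q : X → EReal) (r : (ℕ → X) → EReal) (x : ℕ → X) : EReal :=
  ⨆ t : ℕ, untilTerm q r x t

/-- Robustness of the finite-horizon until `q U_{[0,n]} r`. -/
noncomputable def finUntil (q : X → EReal) (r : (ℕ → X) → EReal) (n : ℕ) (x : ℕ → X) : EReal :=
  ⨆ t ∈ Finset.range (n + 1), untilTerm q r x t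

/-!
All candidate terms `untilTerm q r x_{τ:∞} t`, over every shift `τ` and witness time `t`, lie in
the finite set `{⊤} ∪ range q ∪ range r`, so one pair `(τ, t)` maximises them. At the shift
`t + τ` the zero-time term is `r x_{t+τ:∞}`, which bounds the maximal term from above and
hence dominates every candidate term of `x_{t+τ:∞}`.
-/

open Set

lemma shift_shift (x : ℕ → X) (a b : ℕ) : shift (shift x a) b = shift x (b + a) := by
  funext n
  simp only [shift, add_assoc]

lemma shift_zero (x : ℕ → X) : shift x 0 = x := rfl

lemma untilTerm_zero (q : X → EReal) (r : (ℕ → X) → EReal) (x : ℕ → X) :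
    untilTerm q r x 0 = r x := by
  simp [untilTerm, shift_zero]

lemma untilTerm_le_shift (q : X → EReal) (r : (ℕ → X) → EReal) (x : ℕ → X) (t : ℕ) :
    untilTerm q r x t ≤ r (shift x t) :=
  min_le_left _ _

lemma iInf_mem_insert_top_range {ι α : Type*} [Finite ι] [CompleteLinearOrder α] (f : ι → α) :
    ⨅ i, f i ∈ insert ⊤ (range f) := by
  cases isEmpty_or_nonempty ι with
  | inl _ => exact Or.inl (iInf_of_empty f)
  | inr _ =>
    obtain ⟨i, hi⟩ := exists_eq_ciInf_of_finite (f := f)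
    exact mem_insert_of_mem _ ⟨i, hi⟩

lemma untilTerm_mem (q : X → EReal) (r : (ℕ → X) → EReal) (x : ℕ → X) (t : ℕ) :
    untilTerm q r x t ∈ insert ⊤ (range q ∪ range r) := by
  rcases min_choice (r (shift x t)) (⨅ k : Fin t, q (x k)) with h | h <;> rw [untilTerm, h]
  · exact mem_insert_of_mem _ (mem_union_right _ (mem_range_self _))
  · rcases iInf_mem_insert_top_range (fun k : Fin t => q (x k)) with htop | ⟨k, hk⟩
    · exact Or.inl htop
    · exact mem_insert_of_mem _ (mem_union_left _ ⟨_, hk⟩)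

lemma exists_forall_le_of_finite_range {ι α : Type*} [Nonempty ι] [LinearOrder α] {f : ι → α}
    (hf : (range f).Finite) : ∃ i, ∀ j, f j ≤ f i := by
  obtain ⟨_, ⟨i, rfl⟩, hi⟩ := exists_max_image (range f) id hf (range_nonempty f)
  exact ⟨i, fun j => hi _ (mem_range_self j)⟩

/-- along any trajectory, under the finite-value-set assumption, there is a
finite time τ such that the smallest witness time of ρ_{[q U r]} for the shifted trajectory
x_{τ:∞} equals 0, i.e. the supremum for x_{τ:∞} is attained at t = 0. -/
theorem exists_shift_with_zero_witness (q : X → EReal) (r : (ℕ → X) → EReal)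
    (hq : (Set.range q).Finite) (hr : (Set.range r).Finite) (x : ℕ → X) :
    ∃ τ : ℕ, untilRob q r (shift x τ) = untilTerm q r (shift x τ) 0 := by
  set F : ℕ × ℕ → EReal := fun p => untilTerm q r (shift x p.1) p.2
  have hF : (range F).Finite :=
    ((hq.union hr).insert ⊤).subset (range_subset_iff.2 fun p => untilTerm_mem q r _ p.2)
  obtain ⟨⟨τ, t⟩, hmax⟩ := exists_forall_le_of_finite_range hF
  refine ⟨t + τ, le_antisymm (iSup_le fun s => ?_) (le_iSup _ 0)⟩
  calc untilTerm q r (shift x (t + τ)) s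
      ≤ untilTerm q r (shift x τ) t := hmax (t + τ, s)
    _ ≤ r (shift (shift x τ) t) := untilTerm_le_shift q r _ t
    _ = untilTerm q r (shift x (t + τ)) 0 := by rw [untilTerm_zero, shift_shift]
end

section
/- Optimality of the Next policy: if π_r is an optimal policy for r (achieving V*_r from every history), then the policy that at the initial step picks a₀ ∈ argmax_a V*_r(f(x₀,a)) and thereafter applies π_r to the history shifted by one step is optimal for X r, i.e., it achieves ρ_{[X r]}(x_{0:∞}) = V*_{X r}(x₀) = max_a V*_r(f(x₀,a)) from every initial state. -/
variable {X A : Type*}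

/-- Trajectory of the deterministic system `x_{k+1} = f(x_k, a_k)` from `x0`. -/
def traj (f : X → A → X) (x0 : X) (a : ℕ → A) : ℕ → X
  | 0 => x0
  | n + 1 => f (traj f x0 a n) (a n)

/-- Optimal value of a trajectory score from a state. -/
noncomputable def Vstate (f : X → A → X) (ψ : (ℕ → X) → EReal) (x0 : X) : EReal :=
  ⨆ a : ℕ → A, ψ (traj f x0 a)

/-- Glue a history prefix `x_{0:k-1}` with a continuation trajectory `y` started at time `k`. -/
def splice (x : ℕ → X) (k : ℕ) (y : ℕ → X) : ℕ → X := fun n => if n < k then x n else y (n - k)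

/-- History value function: optimal robustness over all dynamically feasible continuations
of the history `x_{0:k}` (the continuation starts from `x k`). -/
noncomputable def Vhist (f : X → A → X) (ψ : (ℕ → X) → EReal) (x : ℕ → X) (k : ℕ) : EReal :=
  ⨆ a : ℕ → A, ψ (splice x k (traj f (x k) a))

/-- History Q-function: apply action `a` at time `k`, then maximize over continuations. -/
noncomputable def Qhist (f : X → A → X) (ψ : (ℕ → X) → EReal) (x : ℕ → X) (k : ℕ) (a : A) :
    EReal :=
  ⨆ c : ℕ → A, ψ (splice x (k + 1) (traj f (f (x k) a) c))

/-- Trajectory generated by a (non-Markovian) policy `π` from the history `x_{0:k}`: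
it agrees with `x` up to time `k` and thereafter applies `π n` to the history `x_{0:n}`. -/
def genFrom (f : X → A → X) (π : ℕ → (ℕ → X) → A) (x : ℕ → X) (k : ℕ) : ℕ → X
  | 0 => x 0
  | n + 1 =>
    if n + 1 ≤ k then x (n + 1)
    else f (genFrom f π x k n) (π n (fun m => genFrom f π x k (min m n)))
  termination_by n => n
  decreasing_by all_goals omega

lemma genFrom_zero (f : X → A → X) (π : ℕ → (ℕ → X) → A) (x : ℕ → X) (k : ℕ) :
    genFrom f π x k 0 = x 0 := by rw [genFrom]

lemma genFrom_succ (f : X → A → X) (π : ℕ → (ℕ → X) → A) (x : ℕ → X) (n : ℕ) :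
    genFrom f π x 0 (n+1)
      = f (genFrom f π x 0 n) (π n (fun m => genFrom f π x 0 (min m n))) := by
  rw [genFrom]; simp

lemma traj_shift (f : X → A → X) (x0 : X) (c : ℕ → A) :
    shift (traj f x0 c) 1 = traj f (f x0 (c 0)) (shift c 1) := by
  funext n
  induction n with
  | zero => rfl
  | succ n ih =>
      show f (traj f x0 c (n+1)) (c (n+1))
          = f (traj f (f x0 (c 0)) (shift c 1) n) (shift c 1 n)
      rw [← ih]; rfl

/-- optimality of the Next policy. If `πr` is optimal over histories for `r`,
and `a0 x` maximizes `fun a => Vstate f r (f x a)`, then the policy applying `a0` at the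
initial step and thereafter applying `πr` to the one-step-shifted history is optimal for
`X r`: from every initial state `x0` it achieves robustness
`⨆ a, Vstate f r (f x0 a)`, which equals the optimal value of `X r` at `x0`. -/
theorem next_policy_optimal [Nonempty A]
    (f : X → A → X) (r : (ℕ → X) → EReal)
    (πr : ℕ → (ℕ → X) → A)
    (hopt : ∀ (x : ℕ → X) (k : ℕ), r (genFrom f πr x k) = Vhist f r x k)
    (a0 : X → A)
    (ha0 : ∀ (x : X) (a : A), Vstate f r (f x a) ≤ Vstate f r (f x (a0 x)))
    (x0 : X) :
    r (shift
        (genFrom f (fun k h => if k = 0 then a0 (h 0) else πr (k - 1) (shift h 1))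
          (fun _ => x0) 0) 1)
      = (⨆ a : A, Vstate f r (f x0 a)) ∧
    (⨆ a : A, Vstate f r (f x0 a)) = Vstate f (fun y => r (shift y 1)) x0 := by
  set πn : ℕ → (ℕ → X) → A :=
    fun k h => if k = 0 then a0 (h 0) else πr (k - 1) (shift h 1) with hπn
  set y : ℕ → X := fun _ => f x0 (a0 x0) with hy
  -- the generated trajectory shifted by 1 equals the πr-generated trajectory from f x0 (a0 x0)
  have key : ∀ n, genFrom f πn (fun _ => x0) 0 (n+1) = genFrom f πr y 0 n := by
    intro n
    induction n using Nat.strong_induction_on with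
    | _ n ih =>
      cases n with
      | zero =>
          rw [genFrom_succ]
          simp [πn, genFrom_zero, y]
      | succ m =>
          rw [genFrom_succ f πn (fun _ => x0) (m+1), genFrom_succ f πr y m,
            ih m (by omega)]
          congr 1
          have hπ : πn (m+1) = fun h => πr m (shift h 1) := by
            funext h; simp [πn]
          rw [hπ]
          beta_reduce
          congr 1
          funext j
          show genFrom f πn (fun _ => x0) 0 (min (j+1) (m+1)) = genFrom f πr y 0 (min j m)
          have : min (j+1) (m+1) = (min j m) + 1 := by omega
          rw [this, ih (min j m) (by omega)]
  have hshift : shift (genFrom f πn (fun _ => x0) 0) 1 = genFrom f πr y 0 := by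
    funext n; exact key n
  -- splice at 0 is identity
  have hsplice : ∀ z : ℕ → X, splice y 0 z = z := by
    intro z; funext n; simp [splice]
  have hV : Vhist f r y 0 = Vstate f r (f x0 (a0 x0)) := by
    unfold Vhist Vstate
    refine iSup_congr fun a => ?_
    rw [hsplice]
  have hsup : Vstate f r (f x0 (a0 x0)) = ⨆ a : A, Vstate f r (f x0 a) := by
    apply le_antisymm
    · exact le_iSup (fun a => Vstate f r (f x0 a)) (a0 x0)
    · exact iSup_le fun a => ha0 x0 a
  constructor
  · rw [hshift, hopt y 0, hV, hsup]
  · unfold Vstate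
    apply le_antisymm
    · refine iSup_le fun a => iSup_le fun b => ?_
      have : r (shift (traj f x0 (fun n => Nat.rec a (fun m _ => b m) n)) 1)
          ≤ ⨆ c : ℕ → A, r (shift (traj f x0 c) 1) :=
        le_iSup (fun c => r (shift (traj f x0 c) 1)) _
      refine le_trans (le_of_eq ?_) this
      rw [traj_shift]
      congr 1
    · refine iSup_le fun c => ?_
      show r (shift (traj f x0 c) 1) ≤ _
      rw [traj_shift]
      calc r (traj f (f x0 (c 0)) (shift c 1))
          ≤ ⨆ b : ℕ → A, r (traj f (f x0 (c 0)) b) :=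
            le_iSup (fun b => r (traj f (f x0 (c 0)) b)) _
        _ ≤ ⨆ a : A, ⨆ b : ℕ → A, r (traj f (f x0 a) b) :=
            le_iSup (fun a => ⨆ b : ℕ → A, r (traj f (f x0 a) b)) (c 0)
end

section
/- Value identity after the until witness has passed: fix history x_{0:s} and suppose the optimal witness time τ := t*(x_{0:s}) of ψ = q U r satisfies τ < s. Then with c_τ := min_{0 ≤ i < τ} q(x_i), the history value satisfies V_ψ(x_{0:s}) = min( c_τ, V_r(x_{τ:s}) ), where V_r(x_{τ:s}) is the history value of r for the suffix history x_{τ:s}. -/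
variable {X A : Type*}

/-!
If an optimal continuation has witness time `τ` inside the history, then `V_ψ` equals the supremum
over continuations of the single until term at `τ` (it is bounded by `V_ψ` and attained). Since
`τ ≤ s`, the prefix factor `c_τ` of that term is read off the history alone, and `min c_τ` commutes
with the supremum over continuations of `r` on the suffix history `x_{τ:s}`.
-/

lemma shift_splice {x : ℕ → X} {s τ : ℕ} (h : τ ≤ s) (z : ℕ → X) :
    shift (splice x s z) τ = splice (shift x τ) (s - τ) z := by
  funext n
  simp only [shift, splice]
  by_cases hn : n + τ < s
  · rw [if_pos hn, if_pos (by omega)]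
  · rw [if_neg hn, if_neg (by omega)]
    congr 1
    omega

lemma shift_apply_sub {x : ℕ → X} {s τ : ℕ} (h : τ ≤ s) : shift x τ (s - τ) = x s := by
  simp only [shift, Nat.sub_add_cancel h]

lemma untilTerm_splice (q : X → EReal) (r : (ℕ → X) → EReal) {x : ℕ → X} {s τ : ℕ}
    (h : τ ≤ s) (z : ℕ → X) :
    untilTerm q r (splice x s z) τ =
      min (⨅ i : Fin τ, q (x i)) (r (splice (shift x τ) (s - τ) z)) := by
  have hprefix : (⨅ i : Fin τ, q (splice x s z i)) = ⨅ i : Fin τ, q (x i) :=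
    iInf_congr fun i => by simp only [splice, if_pos (i.isLt.trans_le h)]
  rw [untilTerm, shift_splice h, hprefix, min_comm]

lemma le_Vhist (f : X → A → X) (ψ : (ℕ → X) → EReal) (x : ℕ → X) (s : ℕ) (a : ℕ → A) :
    ψ (splice x s (traj f (x s) a)) ≤ Vhist f ψ x s :=
  le_iSup (fun b => ψ (splice x s (traj f (x s) b))) a

lemma untilTerm_le_untilRob (q : X → EReal) (r : (ℕ → X) → EReal) (x : ℕ → X) (t : ℕ) :
    untilTerm q r x t ≤ untilRob q r x :=
  le_iSup (untilTerm q r x) t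

lemma Vhist_untilRob_eq_iSup_untilTerm (f : X → A → X) (q : X → EReal) (r : (ℕ → X) → EReal)
    (x : ℕ → X) (s τ : ℕ) (a₀ : ℕ → A)
    (hopt : untilRob q r (splice x s (traj f (x s) a₀)) = Vhist f (untilRob q r) x s)
    (hτ : untilRob q r (splice x s (traj f (x s) a₀)) =
      untilTerm q r (splice x s (traj f (x s) a₀)) τ) :
    Vhist f (untilRob q r) x s = ⨆ a : ℕ → A, untilTerm q r (splice x s (traj f (x s) a)) τ := by
  refine le_antisymm ?_ (iSup_le fun a => ?_)
  · rw [← hopt, hτ]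
    exact le_iSup (fun a => untilTerm q r (splice x s (traj f (x s) a)) τ) a₀
  · exact (untilTerm_le_untilRob q r _ τ).trans (le_Vhist f (untilRob q r) x s a)

lemma iSup_untilTerm_splice (f : X → A → X) (q : X → EReal) (r : (ℕ → X) → EReal)
    {x : ℕ → X} {s τ : ℕ} (h : τ ≤ s) :
    ⨆ a : ℕ → A, untilTerm q r (splice x s (traj f (x s) a)) τ =
      min (⨅ i : Fin τ, q (x i)) (Vhist f r (shift x τ) (s - τ)) := by
  simp only [untilTerm_splice q r h, Vhist, shift_apply_sub h]
  exact (inf_iSup_eq _ _).symm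

theorem until_value_identity_after_witness_general
    (f : X → A → X) (q : X → EReal) (r : (ℕ → X) → EReal)
    (x : ℕ → X) (s τ : ℕ) (hτs : τ < s)
    (hwit : ∃ a : ℕ → A,
      untilRob q r (splice x s (traj f (x s) a)) = Vhist f (untilRob q r) x s ∧
      untilRob q r (splice x s (traj f (x s) a)) =
        untilTerm q r (splice x s (traj f (x s) a)) τ) :
    Vhist f (untilRob q r) x s =
      min (⨅ i : Fin τ, q (x i)) (Vhist f r (shift x τ) (s - τ)) := by
  obtain ⟨a₀, hopt, hτ⟩ := hwit
  rw [Vhist_untilRob_eq_iSup_untilTerm f q r x s τ a₀ hopt hτ, iSup_untilTerm_splice f q r hτs.le]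

/-- value identity after the until witness has passed. Fix the history
`x_{0:s}` and suppose the optimal witness time `τ` of `ψ = q U r` at this history satisfies
`τ < s`: some feasible continuation attains the history value `Vhist f (untilRob q r) x s`
with witness time `τ`, and `τ` is minimal among witness times of optimal continuations. Then
`Vhist f (untilRob q r) x s = min (min_{0 ≤ i < τ} q (x i)) (Vhist f r (shift x τ) (s - τ))`,
the second factor being the history value of `r` for the suffix history `x_{τ:s}`. -/
theorem until_value_identity_after_witness [Nonempty A]
    (f : X → A → X) (q : X → EReal) (r : (ℕ → X) → EReal)
    (x : ℕ → X) (s τ : ℕ) (hτs : τ < s)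
    (hwit : ∃ a : ℕ → A,
      untilRob q r (splice x s (traj f (x s) a)) = Vhist f (untilRob q r) x s ∧
      untilRob q r (splice x s (traj f (x s) a)) =
        untilTerm q r (splice x s (traj f (x s) a)) τ)
    (hmin : ∀ (a : ℕ → A) (t : ℕ),
      untilRob q r (splice x s (traj f (x s) a)) = Vhist f (untilRob q r) x s →
      untilRob q r (splice x s (traj f (x s) a)) =
        untilTerm q r (splice x s (traj f (x s) a)) t →
      τ ≤ t) :
    Vhist f (untilRob q r) x s =
      min (⨅ i : Fin τ, q (x i)) (Vhist f r (shift x τ) (s - τ)) :=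
  until_value_identity_after_witness_general f q r x s τ hτs hwit
end
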